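/- Let G be the amalgamated product defined in the context. For every positive integer m, G has exactly one subgroup of index m, namely G(m), the subgroup of G generated by ι_1(H_1 × mℤ) ∪ ι_2(H_2 × mℤ); that is, G(m) has index m in G, and every subgroup of G of index m equals G(m). Moreover G(m) is normal in G. -/

import Mathlib

/-- A group is Obraztsov if it is 2-generated, simple, complete (trivial center and all
automorphisms inner), torsion-free, and every nontrivial proper subgroup is infinite cyclic. -/
def IsObraztsov (G : Type*) [Group G] : Prop :=
  (∃ a b : G, Subgroup.closure {a, b} = ⊤) ∧
  IsSimpleGroup G ∧
  Subgroup.center G = ⊥ ∧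
  (∀ φ : G ≃* G, ∃ g : G, ∀ y : G, φ y = g * y * g⁻¹) ∧
  (∀ g : G, g ≠ 1 → ¬IsOfFinOrder g) ∧
  (∀ K : Subgroup G, K ≠ ⊥ → K ≠ ⊤ → IsCyclic K ∧ Infinite K)

/-- `h` generates a maximal cyclic subgroup. -/
def IsMaxCyclicGen {H : Type*} [Group H] (h : H) : Prop :=
  ∀ w : H, Subgroup.zpowers h ≤ Subgroup.zpowers w →
    Subgroup.zpowers h = Subgroup.zpowers w

/-- `u i = (h i, 1) ∈ H i × ℤ`. -/
def amalgU {H : Bool → Type*} [∀ i, Group (H i)] (h : ∀ i, H i) (i : Bool) :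
    H i × Multiplicative ℤ :=
  (h i, Multiplicative.ofAdd (1 : ℤ))

/-- The homomorphism `ℤ → H i × ℤ` sending `1 ↦ u i`. -/
def amalgMap {H : Bool → Type*} [∀ i, Group (H i)] (h : ∀ i, H i) (i : Bool) :
    Multiplicative ℤ →* H i × Multiplicative ℤ :=
  zpowersHom _ (amalgU h i)

/-- The amalgamated free product `G = (H₁ × ℤ) ∗_{u₁ = u₂} (H₂ × ℤ)`. -/
abbrev Amalg (H : Bool → Type*) [∀ i, Group (H i)] (h : ∀ i, H i) : Type _ :=
  Monoid.PushoutI (amalgMap h)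


/-- The subgroup `G(m)` of the amalgam, generated by `ι₁(H₁ × mℤ)` and `ι₂(H₂ × mℤ)`. -/
def AmalgGm (H : Bool → Type*) [∀ i, Group (H i)] (h : ∀ i, H i) (m : ℕ) :
    Subgroup (Amalg H h) :=
  ⨆ i : Bool, Subgroup.map (Monoid.PushoutI.of (φ := amalgMap h) i)
    ((⊤ : Subgroup (H i)).prod (Subgroup.zpowers (Multiplicative.ofAdd (m : ℤ))))

/-!
Sending everything to its `ℤ`-coordinate gives a surjection `π : G → ℤ` (well defined because
`u₁` and `u₂` both have `ℤ`-coordinate `1`). The group `G` is generated by the images of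
`H₁ × 0`, `H₂ × 0` and the common image `u` of `u₁, u₂`, and `π` is injective on `⟨u⟩`, so
`ker π` is the normal closure of `ι₁(H₁) ∪ ι₂(H₂)`. Conjugation by `u` preserves `G(m)`, hence
`G(m)` is normal and equals `π⁻¹(mℤ)`, of index `m`. Conversely, if `B` has finite index, the
infinite simple groups `Hᵢ` map trivially to the finite quotient `G / core B`, so `ker π ≤ B`;
thus `B = π⁻¹(π B)`, and the only subgroup of index `m` in `ℤ` is `mℤ`.
-/

open Monoid Monoid.PushoutI Multiplicative Subgroup

lemma MonoidHom.ker_eq_top_of_finite {G Q : Type*} [Group G] [Group Q] [IsSimpleGroup G]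
    [Infinite G] [Finite Q] (f : G →* Q) : f.ker = ⊤ :=
  f.normal_ker.eq_bot_or_eq_top.resolve_left fun hbot =>
    not_finite_iff_infinite.2 ‹Infinite G› (Finite.of_injective f ((f.ker_eq_bot_iff).1 hbot))

lemma MonoidHom.ker_le_of_sup_zpowers_eq_top {G Q : Type*} [Group G] [Group Q] {f : G →* Q}
    {N : Subgroup G} [N.Normal] (hN : N ≤ f.ker) {c : G} (hc : ¬IsOfFinOrder (f c))
    (htop : N ⊔ zpowers c = ⊤) : f.ker ≤ N := by
  intro g hg
  obtain ⟨n, hn, _, ⟨k, rfl⟩, rfl⟩ := mem_sup_of_normal_left.1 (htop ▸ mem_top g)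
  have hk : f c ^ k = f c ^ (0 : ℤ) := by
    simpa [MonoidHom.mem_ker.1 (hN hn)] using hg
  simpa [injective_zpow_iff_not_isOfFinOrder.2 hc hk] using hn

lemma Subgroup.eq_of_le_of_index_eq {G : Type*} [Group G] {H K : Subgroup G} [K.FiniteIndex]
    (hle : H ≤ K) (hindex : H.index = K.index) : H = K := by
  have hrel : H.relIndex K * K.index = K.index := hindex ▸ relIndex_mul_index hle
  exact le_antisymm hle (relIndex_eq_one.1 ((mul_eq_right₀ FiniteIndex.index_ne_zero).1 hrel))

lemma Int.index_zpowers_ofAdd (a : ℤ) : (zpowers (ofAdd a)).index = a.natAbs :=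
  Int.index_zmultiples a

lemma IsObraztsov.infinite {G : Type*} [Group G] (hG : IsObraztsov G) : Infinite G := by
  obtain ⟨-, _, -, -, htf, -⟩ := hG
  obtain ⟨g, hg⟩ := exists_ne (1 : G)
  exact Infinite.of_injective (g ^ · : ℤ → G) (injective_zpow_iff_not_isOfFinOrder.2 (htf g hg))

namespace Amalg

variable {H : Bool → Type*} [∀ i, Group (H i)] (h : ∀ i, H i)

def u : Amalg H h := base (amalgMap h) (ofAdd 1)

lemma of_amalgU (i : Bool) : of (φ := amalgMap h) i (amalgU h i) = u h := by
  simpa [amalgMap, u] using of_apply_eq_base (amalgMap h) i (ofAdd 1)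

lemma amalgU_zpow (i : Bool) (t : ℤ) : amalgU h i ^ t = (h i ^ t, ofAdd t) := by
  simp [amalgU, ← ofAdd_zsmul]

lemma of_eq_of_mul_u_zpow (i : Bool) (a : H i × Multiplicative ℤ) :
    of (φ := amalgMap h) i a =
      of (φ := amalgMap h) i (a.1 * h i ^ (-toAdd a.2), 1) * u h ^ toAdd a.2 := by
  rw [← of_amalgU, ← map_zpow, ← map_mul, amalgU_zpow]
  simp

lemma base_eq_u_zpow (y : Multiplicative ℤ) :
    base (amalgMap h) y = u h ^ toAdd y := by
  rw [u, ← map_zpow, ← ofAdd_zsmul]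
  simp

lemma eq_top_of_of_mem_of_u_mem {N : Subgroup (Amalg H h)}
    (hof : ∀ i x, of (φ := amalgMap h) i (x, 1) ∈ N) (hu : u h ∈ N) : N = ⊤ := by
  refine (eq_top_iff' N).2 fun g => ?_
  induction g using induction_on with
  | of i a => exact of_eq_of_mul_u_zpow h i a ▸ mul_mem (hof i _) (zpow_mem hu _)
  | base y => exact base_eq_u_zpow h y ▸ zpow_mem hu _
  | mul x y hx hy => exact mul_mem hx hy

def toInt : Amalg H h →* Multiplicative ℤ :=
  lift (fun _ => MonoidHom.snd _ _) (MonoidHom.id _) fun i =>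
    MonoidHom.ext fun y => by simp [amalgMap, amalgU_zpow]

@[simp] lemma toInt_of (i : Bool) (a : H i × Multiplicative ℤ) :
    toInt h (of (φ := amalgMap h) i a) = a.2 :=
  lift_of _ _ _ _

@[simp] lemma toInt_u : toInt h (u h) = ofAdd 1 := by
  rw [← of_amalgU h true, toInt_of]
  rfl

lemma toInt_surjective : Function.Surjective (toInt h) := fun z =>
  ⟨u h ^ toAdd z, by simp [← ofAdd_zsmul]⟩

lemma ker_toInt_le {N : Subgroup (Amalg H h)} [N.Normal]
    (hof : ∀ i x, of (φ := amalgMap h) i (x, 1) ∈ N) : (toInt h).ker ≤ N := by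
  set S := ⋃ i, Set.range fun x : H i => of (φ := amalgMap h) i (x, 1)
  have hker : (toInt h).ker ≤ normalClosure S := by
    refine MonoidHom.ker_le_of_sup_zpowers_eq_top (c := u h) ?_ ?_ ?_
    · exact normalClosure_le_normal (Set.iUnion_subset fun i => Set.range_subset_iff.2 (by simp))
    · simpa using not_isOfFinOrder_of_isMulTorsionFree (a := (ofAdd 1 : Multiplicative ℤ))
        (by decide)
    · exact eq_top_of_of_mem_of_u_mem h
        (fun i x => mem_sup_left (subset_normalClosure (Set.mem_iUnion.2 ⟨i, x, rfl⟩)))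
        (mem_sup_right (mem_zpowers _))
  exact hker.trans (normalClosure_le_normal (Set.iUnion_subset fun i =>
    Set.range_subset_iff.2 (hof i)))

lemma comap_toInt_zpowers_le (m : ℤ) {K : Subgroup (Amalg H h)} (hker : (toInt h).ker ≤ K)
    (hu : u h ^ m ∈ K) : (zpowers (ofAdd m)).comap (toInt h) ≤ K := by
  intro g hg
  obtain ⟨j, hj⟩ := mem_zpowers_iff.1 hg
  have hg' : g * ((u h ^ m) ^ j)⁻¹ ∈ (toInt h).ker := by
    rw [MonoidHom.mem_ker, map_mul, map_inv, ← hj]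
    simp only [map_zpow, toInt_u, ← ofAdd_zsmul, smul_eq_mul, mul_one, mul_inv_cancel]
  simpa using mul_mem (hker hg') (zpow_mem hu j)

end Amalg

namespace AmalgGm

variable {H : Bool → Type*} [∀ i, Group (H i)] (h : ∀ i, H i) (m : ℕ)

open Amalg

lemma of_mem (i : Bool) (x : H i) {y : Multiplicative ℤ} (hy : y ∈ zpowers (ofAdd (m : ℤ))) :
    of (φ := amalgMap h) i (x, y) ∈ AmalgGm H h m :=
  le_iSup (fun i => map (of (φ := amalgMap h) i) ((⊤ : Subgroup (H i)).prod _)) i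
    ⟨(x, y), mem_prod.2 ⟨mem_top x, hy⟩, rfl⟩

lemma u_zpow_mem : u h ^ (m : ℤ) ∈ AmalgGm H h m := by
  rw [← of_amalgU h true, ← map_zpow, amalgU_zpow]
  exact of_mem h m true _ (mem_zpowers _)

lemma le_comap_toInt : AmalgGm H h m ≤ (zpowers (ofAdd (m : ℤ))).comap (toInt h) :=
  iSup_le fun i => map_le_iff_le_comap.2 fun p hp => by simpa using (mem_prod.1 hp).2

lemma u_zpow_mul_mul_inv_mem (s : ℤ) {g : Amalg H h} (hg : g ∈ AmalgGm H h m) :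
    u h ^ s * g * (u h ^ s)⁻¹ ∈ AmalgGm H h m := by
  suffices AmalgGm H h m ≤ (AmalgGm H h m).comap (MulAut.conj (u h ^ s)).toMonoidHom from this hg
  refine iSup_le fun i => map_le_iff_le_comap.2 fun p hp => ?_
  have hconj : u h ^ s * of (φ := amalgMap h) i p * (u h ^ s)⁻¹ =
      of (φ := amalgMap h) i (h i ^ s * p.1 * (h i ^ s)⁻¹, p.2) := by
    rw [← of_amalgU h i, ← map_zpow, ← map_inv, ← map_mul, ← map_mul]
    congr 1
    ext <;> simp [amalgU_zpow]
  simp only [mem_comap, MulEquiv.coe_toMonoidHom, MulAut.conj_apply, hconj]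
  exact of_mem h m i _ (mem_prod.1 hp).2

lemma normal : (AmalgGm H h m).Normal := by
  rw [← normalizer_eq_top_iff]
  refine eq_top_of_of_mem_of_u_mem h (fun i x => le_normalizer (of_mem h m i x (one_mem _))) ?_
  refine mem_normalizer_iff.2 fun g => ⟨fun hg => by simpa using u_zpow_mul_mul_inv_mem h m 1 hg,
    fun hg => ?_⟩
  simpa [mul_assoc] using u_zpow_mul_mul_inv_mem h m (-1) hg

lemma eq_comap_toInt : AmalgGm H h m = (zpowers (ofAdd (m : ℤ))).comap (toInt h) :=
  have := normal h m
  le_antisymm (le_comap_toInt h m) <| comap_toInt_zpowers_le h m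
    (ker_toInt_le h fun i x => of_mem h m i x (one_mem _)) (u_zpow_mem h m)

lemma index_eq : (AmalgGm H h m).index = m := by
  rw [eq_comap_toInt, index_comap_of_surjective _ (toInt_surjective h), Int.index_zpowers_ofAdd,
    Int.natAbs_natCast]

variable [∀ i, IsSimpleGroup (H i)] [∀ i, Infinite (H i)]

lemma of_mem_of_finiteIndex {N : Subgroup (Amalg H h)} [N.Normal] [N.FiniteIndex] (i : Bool)
    (x : H i) : of (φ := amalgMap h) i (x, 1) ∈ N := by
  have hker := ((QuotientGroup.mk' N).comp
    ((of (φ := amalgMap h) i).comp (MonoidHom.inl _ _))).ker_eq_top_of_finite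
  have hx : x ∈ MonoidHom.ker _ := hker ▸ mem_top x
  simpa using hx

lemma eq_of_index_eq (hm : m ≠ 0) {B : Subgroup (Amalg H h)} (hB : B.index = m) :
    B = AmalgGm H h m := by
  have : B.FiniteIndex := ⟨hB ▸ hm⟩
  have hker : (toInt h).ker ≤ B :=
    (ker_toInt_le h fun i x => of_mem_of_finiteIndex h i x).trans B.normalCore_le
  have : B.Normal := comap_map_eq_self hker ▸ (map (toInt h) B).normal_of_isMulCommutative.comap _
  refine (eq_of_le_of_index_eq ?_ (by rw [index_eq, hB])).symm
  rw [eq_comap_toInt]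
  exact comap_toInt_zpowers_le h m hker (by simpa [hB] using B.pow_index_mem (u h))

end AmalgGm

theorem stmt_18_general (H : Bool → Type*) [∀ i, Group (H i)]
    (hObr : ∀ i, IsObraztsov (H i))
    (h : ∀ i, H i)
    (m : ℕ) (hm : 0 < m) :
    (AmalgGm H h m).Normal ∧
    (AmalgGm H h m).index = m ∧
    ∀ B : Subgroup (Amalg H h), B.index = m → B = AmalgGm H h m := by
  have : ∀ i, IsSimpleGroup (H i) := fun i => (hObr i).2.1
  have : ∀ i, Infinite (H i) := fun i => (hObr i).infinite
  exact ⟨AmalgGm.normal h m, AmalgGm.index_eq h m, fun _ => AmalgGm.eq_of_index_eq h m hm.ne'⟩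

/-- For every positive integer `m`, the amalgam `G` has exactly one subgroup of index `m`,
namely `G(m)`; moreover `G(m)` is normal in `G`. -/
theorem stmt_18 (H : Bool → Type*) [∀ i, Group (H i)]
    (hObr : ∀ i, IsObraztsov (H i))
    (h : ∀ i, H i) (hmax : ∀ i, IsMaxCyclicGen (h i))
    (m : ℕ) (hm : 0 < m) :
    (AmalgGm H h m).Normal ∧
    (AmalgGm H h m).index = m ∧
    ∀ B : Subgroup (Amalg H h), B.index = m → B = AmalgGm H h m :=
  stmt_18_general H hObr h m hm
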